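/- For all bounded measurable ψ₁, ψ₂ : [0,T] → ℝ and all t ∈ [0,T], |Λ(ψ₁)(t) − Λ(ψ₂)(t)| ≤ C₁ · sup_{ξ ∈ [0,T]} |ψ₁(ξ) − ψ₂(ξ)|, where C₁ = a₀ C_λ α_Aγ_A T + (2/k_A) a₀² r_A C_λ² α_Aγ_A T². In particular the map ψ ↦ Λ(ψ) is Lipschitz continuous with respect to the supremum norm, with a Lipschitz constant depending only on r_A, k_A, α_A, γ_A, C_λ, T and a₀. -/

import Mathlib

open MeasureTheory Set intervalIntegral

/-!
Write `Λ(ψ) = N(ψ) / D(ψ)`. Since `exp` is 1-Lipschitz on `(-∞, 0]`, the damping factor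
`exp (-α_Aγ_A ∫₀ˢ |ψ|)` moves by at most `α_Aγ_A s ‖ψ₁ - ψ₂‖_∞` when `ψ` changes; this bounds
`|N₁ - N₂|` directly and `|D₁ - D₂|` after one more integration. With `D ≥ k_A` and
`|N| ≤ a₀ k_A C_λ`, the estimate `|N₁/D₁ - N₂/D₂| ≤ |N₁ - N₂|/k + |N₂| |D₁ - D₂|/k²` gives the constant.
-/

/-- The explicit solution operator `Λ` for the tumor-cell equation (Bernoulli's method). -/
noncomputable def Lam (rA kA αA γA lam a₀ : ℝ) (ψ : ℝ → ℝ) (t : ℝ) : ℝ :=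
  (a₀ * kA * Real.exp (lam * t) * Real.exp (-(αA * γA) * ∫ ξ in (0:ℝ)..t, |ψ ξ|)) /
    (kA + a₀ * rA *
      ∫ s in (0:ℝ)..t, Real.exp (lam * s) * Real.exp (-(αA * γA) * ∫ ξ in (0:ℝ)..s, |ψ ξ|))

theorem Real.abs_exp_sub_exp_le_of_nonpos {x y : ℝ} (hx : x ≤ 0) (hy : y ≤ 0) :
    |Real.exp x - Real.exp y| ≤ |x - y| := by
  wlog h : y ≤ x generalizing x y
  · rw [abs_sub_comm, abs_sub_comm x y]; exact this hy hx (le_of_not_ge h)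
  rw [abs_of_nonneg (sub_nonneg.2 (Real.exp_le_exp.2 h)), abs_of_nonneg (sub_nonneg.2 h)]
  have h_exp_y : Real.exp y = Real.exp x * Real.exp (y - x) := by rw [← Real.exp_add]; ring_nf
  nlinarith [Real.exp_le_one_iff.2 hx, Real.add_one_le_exp (y - x), Real.exp_pos x]

theorem abs_div_sub_div_le {N₁ N₂ D₁ D₂ k : ℝ} (hk : 0 < k) (h₁ : k ≤ D₁) (h₂ : k ≤ D₂) :
    |N₁ / D₁ - N₂ / D₂| ≤ |N₁ - N₂| / k + |N₂| * |D₁ - D₂| / k ^ 2 := by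
  have hD₁ : 0 < D₁ := hk.trans_le h₁
  have hD₂ : 0 < D₂ := hk.trans_le h₂
  have h_split : N₁ / D₁ - N₂ / D₂ = (N₁ - N₂) / D₁ + N₂ * (D₂ - D₁) / (D₁ * D₂) := by
    field_simp; ring
  calc |N₁ / D₁ - N₂ / D₂| ≤ |N₁ - N₂| / D₁ + |N₂| * |D₁ - D₂| / (D₁ * D₂) := by
        rw [h_split, abs_sub_comm D₁]
        refine (abs_add_le _ _).trans_eq ?_
        rw [abs_div, abs_div, abs_mul, abs_of_pos hD₁, abs_of_pos (mul_pos hD₁ hD₂)]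
    _ ≤ |N₁ - N₂| / k + |N₂| * |D₁ - D₂| / k ^ 2 := by
        rw [sq]; gcongr

theorem abs_intervalIntegral_sub_le {f g : ℝ → ℝ} {a b C : ℝ} (hab : a ≤ b)
    (hf : IntervalIntegrable f volume a b) (hg : IntervalIntegrable g volume a b)
    (h : ∀ x ∈ Ioc a b, |f x - g x| ≤ C) :
    |(∫ x in a..b, f x) - ∫ x in a..b, g x| ≤ C * (b - a) := by
  rw [← integral_sub hf hg]
  have := norm_integral_le_of_norm_le_const (f := fun x => f x - g x)
    (fun x hx => by rw [uIoc_of_le hab] at hx; exact h x hx)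
  simpa [abs_of_nonneg (sub_nonneg.2 hab)] using this

theorem le_biSup_of_bddAbove_image {β : Type*} {f : β → ℝ} {s : Set β} (H : BddAbove (f '' s))
    {c : β} (hc : c ∈ s) : f c ≤ ⨆ x ∈ s, f x := by
  refine le_ciSup₂ (f := fun x (_ : x ∈ s) => f x) ?_ c hc
  obtain ⟨M, hM⟩ := H
  refine ⟨M, ?_⟩
  simp only [mem_upperBounds, mem_iUnion, mem_range] at hM ⊢
  rintro _ ⟨x, hx, rfl⟩
  exact hM _ ⟨x, hx, rfl⟩

theorem exp_mul_le_max_one_exp_mul {lam s T : ℝ} (hs : s ∈ Icc 0 T) :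
    Real.exp (lam * s) ≤ max 1 (Real.exp (lam * T)) := by
  rcases le_total lam 0 with h | h
  · exact le_max_of_le_left (Real.exp_le_one_iff.2 (mul_nonpos_of_nonpos_of_nonneg h hs.1))
  · exact le_max_of_le_right (Real.exp_le_exp.2 (mul_le_mul_of_nonneg_left hs.2 h))

theorem integrableOn_Icc_abs_of_abs_le {ψ : ℝ → ℝ} {a b M : ℝ} (hψ : Measurable ψ)
    (hM : ∀ t ∈ Icc a b, |ψ t| ≤ M) : IntegrableOn (fun ξ => |ψ ξ|) (Icc a b) :=
  Measure.integrableOn_of_bounded (M := M) measure_Icc_lt_top.ne hψ.abs.aestronglyMeasurable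
    ((ae_restrict_iff' measurableSet_Icc).2 (ae_of_all _ fun ξ hξ => by
      simpa only [Real.norm_eq_abs, abs_abs] using hM ξ hξ))

noncomputable def decay (g : ℝ) (ψ : ℝ → ℝ) (s : ℝ) : ℝ :=
  Real.exp (-g * ∫ ξ in (0:ℝ)..s, |ψ ξ|)

theorem Lam_eq_decay (rA kA αA γA lam a₀ : ℝ) (ψ : ℝ → ℝ) (t : ℝ) :
    Lam rA kA αA γA lam a₀ ψ t = a₀ * kA * Real.exp (lam * t) * decay (αA * γA) ψ t /
      (kA + a₀ * rA * ∫ s in (0:ℝ)..t, Real.exp (lam * s) * decay (αA * γA) ψ s) :=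
  rfl

section decay

variable {g : ℝ} {ψ ψ₁ ψ₂ : ℝ → ℝ} {s t : ℝ}

theorem decay_pos : 0 < decay g ψ s := Real.exp_pos _

theorem neg_mul_integral_abs_nonpos (hg : 0 ≤ g) (hs : 0 ≤ s) : -g * ∫ ξ in (0:ℝ)..s, |ψ ξ| ≤ 0 :=
  mul_nonpos_of_nonpos_of_nonneg (neg_nonpos.2 hg) (integral_nonneg hs fun _ _ => abs_nonneg _)

theorem decay_le_one (hg : 0 ≤ g) (hs : 0 ≤ s) : decay g ψ s ≤ 1 :=
  Real.exp_le_one_iff.2 (neg_mul_integral_abs_nonpos hg hs)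

theorem abs_decay_sub_decay_le {S : ℝ} (hg : 0 ≤ g) (hs : 0 ≤ s)
    (h₁ : IntervalIntegrable (fun ξ => |ψ₁ ξ|) volume 0 s)
    (h₂ : IntervalIntegrable (fun ξ => |ψ₂ ξ|) volume 0 s)
    (hS : ∀ ξ ∈ Ioc 0 s, |ψ₁ ξ - ψ₂ ξ| ≤ S) :
    |decay g ψ₁ s - decay g ψ₂ s| ≤ g * S * s := by
  have h_int : |(∫ ξ in (0:ℝ)..s, |ψ₁ ξ|) - (∫ ξ in (0:ℝ)..s, |ψ₂ ξ|)| ≤ S * s := by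
    simpa using abs_intervalIntegral_sub_le hs h₁ h₂
      fun ξ hξ => (abs_abs_sub_abs_le_abs_sub _ _).trans (hS ξ hξ)
  calc |decay g ψ₁ s - decay g ψ₂ s|
      ≤ |-g * (∫ ξ in (0:ℝ)..s, |ψ₁ ξ|) - -g * (∫ ξ in (0:ℝ)..s, |ψ₂ ξ|)| :=
        Real.abs_exp_sub_exp_le_of_nonpos (neg_mul_integral_abs_nonpos hg hs)
          (neg_mul_integral_abs_nonpos hg hs)
    _ = g * |(∫ ξ in (0:ℝ)..s, |ψ₁ ξ|) - (∫ ξ in (0:ℝ)..s, |ψ₂ ξ|)| := by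
        rw [← mul_sub, abs_mul, abs_neg, abs_of_nonneg hg]
    _ ≤ g * S * s := by rw [mul_assoc]; gcongr

theorem continuousOn_decay (hψ : IntegrableOn (fun ξ => |ψ ξ|) (Icc 0 t)) :
    ContinuousOn (decay g ψ) (Icc 0 t) := by
  rcases le_total 0 t with ht | ht
  · have := continuousOn_primitive_interval (a := 0) (b := t) (μ := volume)
      (f := fun ξ => |ψ ξ|) (by rwa [uIcc_of_le ht])
    rw [uIcc_of_le ht] at this
    exact Real.continuous_exp.comp_continuousOn (continuousOn_const.mul this)
  · exact (subsingleton_Icc_of_ge ht).continuousOn _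

theorem abs_decay_sub_decay_le_of_integrableOn {S : ℝ} (hg : 0 ≤ g)
    (h₁ : IntegrableOn (fun ξ => |ψ₁ ξ|) (Icc 0 t)) (h₂ : IntegrableOn (fun ξ => |ψ₂ ξ|) (Icc 0 t))
    (hS : ∀ ξ ∈ Icc 0 t, |ψ₁ ξ - ψ₂ ξ| ≤ S) (hs : s ∈ Icc 0 t) :
    |decay g ψ₁ s - decay g ψ₂ s| ≤ g * S * t := by
  have hS0 : 0 ≤ S := (abs_nonneg _).trans (hS s hs)
  have h_sub : Icc 0 s ⊆ Icc 0 t := Icc_subset_Icc le_rfl hs.2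
  calc |decay g ψ₁ s - decay g ψ₂ s| ≤ g * S * s :=
        abs_decay_sub_decay_le hg hs.1
          ((intervalIntegrable_iff_integrableOn_Icc_of_le hs.1).2 (h₁.mono_set h_sub))
          ((intervalIntegrable_iff_integrableOn_Icc_of_le hs.1).2 (h₂.mono_set h_sub))
          fun ξ hξ => hS ξ ⟨hξ.1.le, hξ.2.trans hs.2⟩
    _ ≤ g * S * t := by gcongr; exact hs.2

theorem intervalIntegrable_exp_mul_decay (lam : ℝ) (ht : 0 ≤ t)
    (hψ : IntegrableOn (fun ξ => |ψ ξ|) (Icc 0 t)) :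
    IntervalIntegrable (fun s => Real.exp (lam * s) * decay g ψ s) volume 0 t :=
  ((Real.continuous_exp.comp (continuous_const.mul continuous_id)).continuousOn.mul
    (continuousOn_decay hψ)).intervalIntegrable_of_Icc ht

end decay

theorem abs_Lam_sub_Lam_le {rA kA αA γA lam a₀ t C S : ℝ} {ψ₁ ψ₂ : ℝ → ℝ}
    (hrA : 0 ≤ rA) (hkA : 0 < kA) (hg : 0 ≤ αA * γA) (ha₀ : 0 ≤ a₀) (ht : 0 ≤ t)
    (h₁ : IntegrableOn (fun ξ => |ψ₁ ξ|) (Icc 0 t)) (h₂ : IntegrableOn (fun ξ => |ψ₂ ξ|) (Icc 0 t))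
    (hC : ∀ s ∈ Icc 0 t, Real.exp (lam * s) ≤ C) (hS : ∀ ξ ∈ Icc 0 t, |ψ₁ ξ - ψ₂ ξ| ≤ S) :
    |Lam rA kA αA γA lam a₀ ψ₁ t - Lam rA kA αA γA lam a₀ ψ₂ t| ≤
      a₀ * C * (αA * γA) * t * S + a₀ ^ 2 * rA * C ^ 2 * (αA * γA) * t ^ 2 * S / kA := by
  set g := αA * γA
  have hC0 : 0 ≤ C := (Real.exp_pos _).le.trans (hC 0 ⟨le_rfl, ht⟩)
  have h_decay : ∀ s ∈ Icc 0 t, |decay g ψ₁ s - decay g ψ₂ s| ≤ g * S * t :=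
    fun _ hs => abs_decay_sub_decay_le_of_integrableOn hg h₁ h₂ hS hs
  have h_num : |a₀ * kA * Real.exp (lam * t) * decay g ψ₁ t -
      a₀ * kA * Real.exp (lam * t) * decay g ψ₂ t| ≤ a₀ * kA * C * (g * S * t) := by
    rw [← mul_sub, abs_mul, abs_of_nonneg (by positivity)]
    gcongr
    exacts [hC t ⟨ht, le_rfl⟩, h_decay t ⟨ht, le_rfl⟩]
  have h_num₂ : |a₀ * kA * Real.exp (lam * t) * decay g ψ₂ t| ≤ a₀ * kA * C := by
    have h_pos : 0 ≤ decay g ψ₂ t := decay_pos.le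
    rw [abs_of_nonneg (by positivity)]
    calc a₀ * kA * Real.exp (lam * t) * decay g ψ₂ t ≤ a₀ * kA * C * 1 := by
          gcongr
          exacts [hC t ⟨ht, le_rfl⟩, decay_le_one hg ht]
      _ = a₀ * kA * C := mul_one _
  have h_den : |(kA + a₀ * rA * ∫ s in (0:ℝ)..t, Real.exp (lam * s) * decay g ψ₁ s) -
      (kA + a₀ * rA * ∫ s in (0:ℝ)..t, Real.exp (lam * s) * decay g ψ₂ s)| ≤
      a₀ * rA * (C * (g * S * t) * t) := by
    rw [add_sub_add_left_eq_sub, ← mul_sub, abs_mul, abs_of_nonneg (by positivity)]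
    gcongr
    simpa using abs_intervalIntegral_sub_le ht (intervalIntegrable_exp_mul_decay lam ht h₁)
      (intervalIntegrable_exp_mul_decay lam ht h₂) fun s hs => by
      rw [← mul_sub, abs_mul, abs_of_pos (Real.exp_pos _)]
      exact mul_le_mul (hC s ⟨hs.1.le, hs.2⟩) (h_decay s ⟨hs.1.le, hs.2⟩) (abs_nonneg _) hC0
  have h_den_ge : ∀ ψ : ℝ → ℝ,
      kA ≤ kA + a₀ * rA * ∫ s in (0:ℝ)..t, Real.exp (lam * s) * decay g ψ s := fun ψ =>
    le_add_of_nonneg_right (mul_nonneg (by positivity)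
      (integral_nonneg ht fun s _ => (mul_pos (Real.exp_pos _) decay_pos).le))
  rw [Lam_eq_decay, Lam_eq_decay]
  calc _ ≤ _ := abs_div_sub_div_le hkA (h_den_ge ψ₁) (h_den_ge ψ₂)
    _ ≤ a₀ * kA * C * (g * S * t) / kA +
          a₀ * kA * C * (a₀ * rA * (C * (g * S * t) * t)) / kA ^ 2 := by
        gcongr
    _ = a₀ * C * g * t * S + a₀ ^ 2 * rA * C ^ 2 * g * t ^ 2 * S / kA := by
        field_simp

theorem Lam_lipschitz_general
    (T rA kA μA εA αA γA a₀ : ℝ)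
    (hrA : 0 < rA) (hkA : 0 < kA)
    (hαA : 0 ≤ αA) (hγA : 0 ≤ γA) (ha₀ : 0 ≤ a₀)
    (ψ₁ ψ₂ : ℝ → ℝ) (hmeas₁ : Measurable ψ₁) (hmeas₂ : Measurable ψ₂)
    (hbdd₁ : ∃ M : ℝ, ∀ t ∈ Icc (0 : ℝ) T, |ψ₁ t| ≤ M)
    (hbdd₂ : ∃ M : ℝ, ∀ t ∈ Icc (0 : ℝ) T, |ψ₂ t| ≤ M) :
    ∀ t ∈ Icc (0 : ℝ) T,
      |Lam rA kA αA γA (rA - (μA + εA)) a₀ ψ₁ t -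
        Lam rA kA αA γA (rA - (μA + εA)) a₀ ψ₂ t| ≤
      (a₀ * max 1 (Real.exp ((rA - (μA + εA)) * T)) * (αA * γA) * T +
          (2 / kA) * a₀ ^ 2 * rA * (max 1 (Real.exp ((rA - (μA + εA)) * T))) ^ 2 *
            (αA * γA) * T ^ 2) *
        ⨆ ξ ∈ Icc (0 : ℝ) T, |ψ₁ ξ - ψ₂ ξ| := by
  intro t ht
  obtain ⟨M₁, hM₁⟩ := hbdd₁
  obtain ⟨M₂, hM₂⟩ := hbdd₂
  set C := max 1 (Real.exp ((rA - (μA + εA)) * T))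
  set S := ⨆ ξ ∈ Icc (0 : ℝ) T, |ψ₁ ξ - ψ₂ ξ|
  have hS : ∀ ξ ∈ Icc 0 T, |ψ₁ ξ - ψ₂ ξ| ≤ S := fun ξ hξ =>
    le_biSup_of_bddAbove_image ⟨M₁ + M₂, by
      rintro _ ⟨x, hx, rfl⟩
      exact (abs_sub _ _).trans (add_le_add (hM₁ x hx) (hM₂ x hx))⟩ hξ
  have hS0 : 0 ≤ S := (abs_nonneg _).trans (hS t ht)
  have hg : 0 ≤ αA * γA := mul_nonneg hαA hγA
  have h_sub : Icc 0 t ⊆ Icc 0 T := Icc_subset_Icc le_rfl ht.2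
  calc _ ≤ a₀ * C * (αA * γA) * t * S + a₀ ^ 2 * rA * C ^ 2 * (αA * γA) * t ^ 2 * S / kA :=
        abs_Lam_sub_Lam_le hrA.le hkA hg ha₀ ht.1
          (integrableOn_Icc_abs_of_abs_le hmeas₁ fun s hs => hM₁ s (h_sub hs))
          (integrableOn_Icc_abs_of_abs_le hmeas₂ fun s hs => hM₂ s (h_sub hs))
          (fun s hs => exp_mul_le_max_one_exp_mul ⟨hs.1, hs.2.trans ht.2⟩)
          (fun ξ hξ => hS ξ (h_sub hξ))
    _ ≤ a₀ * C * (αA * γA) * T * S + 2 * (a₀ ^ 2 * rA * C ^ 2 * (αA * γA) * T ^ 2 * S) / kA := by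
        have ht0 : 0 ≤ t := ht.1
        gcongr a₀ * C * (αA * γA) * ?_ * S + ?_ / kA
        · exact ht.2
        · calc _ ≤ a₀ ^ 2 * rA * C ^ 2 * (αA * γA) * T ^ 2 * S := by gcongr; exact ht.2
            _ ≤ _ := le_mul_of_one_le_left (by positivity) one_le_two
    _ = _ := by ring

/-- **Lemma 5(iii) of the paper.** `Λ` is Lipschitz in the sup norm on `[0,T]`, with
Lipschitz constant `C₁ = a₀ C_λ α_Aγ_A T + (2/k_A) a₀² r_A C_λ² α_Aγ_A T²`. -/
theorem Lam_lipschitz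
    (T rA kA μA εA αA γA a₀ : ℝ)
    (hT : 0 < T) (hrA : 0 < rA) (hkA : 0 < kA)
    (hμA : 0 ≤ μA) (hεA : 0 ≤ εA) (hαA : 0 ≤ αA) (hγA : 0 ≤ γA) (ha₀ : 0 ≤ a₀)
    (ψ₁ ψ₂ : ℝ → ℝ) (hmeas₁ : Measurable ψ₁) (hmeas₂ : Measurable ψ₂)
    (hbdd₁ : ∃ M : ℝ, ∀ t ∈ Icc (0 : ℝ) T, |ψ₁ t| ≤ M)
    (hbdd₂ : ∃ M : ℝ, ∀ t ∈ Icc (0 : ℝ) T, |ψ₂ t| ≤ M) :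
    ∀ t ∈ Icc (0 : ℝ) T,
      |Lam rA kA αA γA (rA - (μA + εA)) a₀ ψ₁ t -
        Lam rA kA αA γA (rA - (μA + εA)) a₀ ψ₂ t| ≤
      (a₀ * max 1 (Real.exp ((rA - (μA + εA)) * T)) * (αA * γA) * T +
          (2 / kA) * a₀ ^ 2 * rA * (max 1 (Real.exp ((rA - (μA + εA)) * T))) ^ 2 *
            (αA * γA) * T ^ 2) *
        ⨆ ξ ∈ Icc (0 : ℝ) T, |ψ₁ ξ - ψ₂ ξ| :=
  Lam_lipschitz_general T rA kA μA εA αA γA a₀ hrA hkA hαA hγA ha₀ ψ₁ ψ₂ hmeas₁ hmeas₂ hbdd₁ hbdd₂
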